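/- Let d ≥ 3 be an integer and λ > 0, and define Φ_λ(a,b) = (1/2)log(1 + λ a^d) + (1/2)log(1 + λ b^d) − (d/2)log(a + b − ab) for a, b ∈ (0,1). If b = 1/(1 + λ a^{d-1}), then the partial derivative of Φ_λ(a,b) with respect to a (with b held fixed) vanishes. -/

import Mathlib

/-
At a belief-propagation fixed point `b (1 + λ a^(d-1)) = 1` one has `1 - b = λ a^(d-1) b` and
`a + b - a b = b (1 + λ a^d)`, so the `a`-derivatives of the two logarithms depending on `a`,
`(d/2) λ a^(d-1) / (1 + λ a^d)` and `(d/2) (1 - b) / (a + b - a b)`, coincide.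
-/

open Set

/-- The bipartite hard-core Bethe free energy functional. -/
noncomputable def hcPhi (d : ℕ) (lam a b : ℝ) : ℝ :=
  (1/2) * Real.log (1 + lam * a ^ d) + (1/2) * Real.log (1 + lam * b ^ d)
    - ((d:ℝ)/2) * Real.log (a + b - a * b)

theorem hasDerivAt_hcPhi_left (d : ℕ) (lam a b : ℝ) (hA : 1 + lam * a ^ d ≠ 0)
    (hB : a + b - a * b ≠ 0) :
    HasDerivAt (fun x => hcPhi d lam x b)
      ((1/2) * (lam * (d * a ^ (d - 1)) / (1 + lam * a ^ d))
        - (d / 2) * ((1 - b) / (a + b - a * b))) a := by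
  have hlogA : HasDerivAt (fun x => Real.log (1 + lam * x ^ d))
      (lam * (d * a ^ (d - 1)) / (1 + lam * a ^ d)) a :=
    (((hasDerivAt_pow d a).const_mul lam).const_add 1).log hA
  have hlogB : HasDerivAt (fun x => Real.log (x + b - x * b)) ((1 - b) / (a + b - a * b)) a := by
    have hlin : HasDerivAt (fun x => x + b - x * b) (1 - b) a := by
      have := ((hasDerivAt_id a).add_const b).sub ((hasDerivAt_id a).mul_const b)
      rwa [one_mul] at this
    exact hlin.log hB
  exact ((hlogA.const_mul (1/2)).add_const _).sub (hlogB.const_mul ((d : ℝ) / 2))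

theorem add_sub_mul_eq_of_bp_fixed {d : ℕ} (hd : d ≠ 0) {lam a b : ℝ}
    (hfix : b * (1 + lam * a ^ (d - 1)) = 1) :
    a + b - a * b = b * (1 + lam * a ^ d) := by
  obtain ⟨k, rfl⟩ := Nat.exists_eq_succ_of_ne_zero hd
  simp only [Nat.succ_sub_one, pow_succ] at hfix ⊢
  linear_combination -a * hfix

theorem one_sub_div_add_sub_mul_of_bp_fixed {d : ℕ} (hd : d ≠ 0) {lam a b : ℝ}
    (hb : b ≠ 0) (hA : 1 + lam * a ^ d ≠ 0) (hfix : b * (1 + lam * a ^ (d - 1)) = 1) :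
    (1 - b) / (a + b - a * b) = lam * a ^ (d - 1) / (1 + lam * a ^ d) := by
  rw [add_sub_mul_eq_of_bp_fixed hd hfix, div_eq_div_iff (mul_ne_zero hb hA) hA]
  linear_combination -(1 + lam * a ^ d) * hfix

theorem stmt7 (d : ℕ) (hd : 3 ≤ d) (lam : ℝ) (hlam : 0 < lam)
    (a b : ℝ) (ha : a ∈ Ioo (0:ℝ) 1) (hb : b ∈ Ioo (0:ℝ) 1)
    (hfix : b = 1 / (1 + lam * a ^ (d - 1))) :
    HasDerivAt (fun x => hcPhi d lam x b) 0 a := by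
  have hA : 1 + lam * a ^ d ≠ 0 := by have := ha.1; positivity
  have hbp : b * (1 + lam * a ^ (d - 1)) = 1 := by
    have : 0 < 1 + lam * a ^ (d - 1) := by have := ha.1; positivity
    rw [hfix, one_div_mul_cancel this.ne']
  have hd0 : d ≠ 0 := by omega
  have hB : a + b - a * b ≠ 0 := by
    rw [add_sub_mul_eq_of_bp_fixed hd0 hbp]
    exact mul_ne_zero hb.1.ne' hA
  convert hasDerivAt_hcPhi_left d lam a b hA hB using 1
  rw [one_sub_div_add_sub_mul_of_bp_fixed hd0 hb.1.ne' hA hbp]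
  ring
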